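/- Let u, u₁, u₂, z be words over {a,b}, let w₁ = u·a·u₁ and w₂ = u·b·u₂. Then m(w̄₁·a·z·b·w₂) ≥ m(w̄₁·b·z̄·a·w₂), with equality if and only if u₁ and u₂ are both empty. -/

import Mathlib

def A : Matrix (Fin 2) (Fin 2) ℤ := !![1,1;1,2]
def B : Matrix (Fin 2) (Fin 2) ℤ := !![2,1;1,1]
/-- matrix of a word: `false` is the letter `a`, `true` is the letter `b` -/
def Mw (w : List Bool) : Matrix (Fin 2) (Fin 2) ℤ :=
  (w.map (fun x => if x then B else A)).prod
/-- the m-value: the top-right entry -/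
def mval (w : List Bool) : ℤ := Mw w 0 1
def U : Matrix (Fin 2) (Fin 2) ℤ := !![0,-1;1,0]
def J : Matrix (Fin 2) (Fin 2) ℤ := !![0,1;1,0]
/-- reversal with letters exchanged -/
def Ebar (w : List Bool) : List Bool := (w.map (fun x => !x)).reverse
def pell : ℕ → ℕ
  | 0 => 0
  | 1 => 1
  | n+2 => 2 * pell (n+1) + pell n

/-!
Since `A` and `B` are symmetric, `M(w̄) = M(w)ᵀ`. The two words share the prefix `w̄₁` and the
suffix `w₂`, and their middle factors `A N B` and `B Nᵀ A` (with `N = M(z)`) are transposes of each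
other, so they differ by `c • U` with `c = N₀₀ + 3 N₁₀ + N₁₁ > 0`. Writing `P = M(u)`, the
identity `Pᵀ U P = det P • U = U` removes the common part `u`, and the difference of the two
m-values becomes `c` times the top-right entry of `M(u₁)ᵀ (A U B) M(u₂)`, where
`A U B = [[1,0],[3,1]]`. That entry is nonnegative, and it vanishes exactly when
`M(u₁)₁₀ = M(u₂)₀₁ = 0`, i.e. when `u₁` and `u₂` are empty.
-/

open Matrix

lemma Mw_append (v w : List Bool) : Mw (v ++ w) = Mw v * Mw w := by
  simp [Mw]

lemma Mw_cons (x : Bool) (w : List Bool) : Mw (x :: w) = (if x then B else A) * Mw w := by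
  simp [Mw]

lemma Mw_singleton (x : Bool) : Mw [x] = if x then B else A := by
  simp [Mw]

lemma transpose_A : Aᵀ = A := by
  ext i j; fin_cases i <;> fin_cases j <;> rfl

lemma transpose_B : Bᵀ = B := by
  ext i j; fin_cases i <;> fin_cases j <;> rfl

lemma Mw_reverse (w : List Bool) : Mw w.reverse = (Mw w)ᵀ := by
  induction w with
  | nil => simp [Mw]
  | cons x w ih =>
    rw [List.reverse_cons, Mw_append, ih, Mw_singleton, Mw_cons, transpose_mul]
    cases x <;> simp [transpose_A, transpose_B]

lemma det_Mw (w : List Bool) : (Mw w).det = 1 := by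
  induction w with
  | nil => simp [Mw]
  | cons x w ih =>
    rw [Mw_cons, det_mul, ih, mul_one]
    cases x <;> simp [A, B, det_fin_two_of]

lemma Mw_entries_bounds (w : List Bool) :
    1 ≤ Mw w 0 0 ∧ 0 ≤ Mw w 0 1 ∧ 0 ≤ Mw w 1 0 ∧ 1 ≤ Mw w 1 1 := by
  induction w with
  | nil => simp [Mw]
  | cons x w ih =>
    obtain ⟨h₀₀, h₀₁, h₁₀, h₁₁⟩ := ih
    rw [Mw_cons]
    cases x <;> simp [A, B, mul_apply, Fin.sum_univ_two] <;> refine ⟨?_, ?_, ?_, ?_⟩ <;> linarith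

lemma Mw_offDiag_pos {w : List Bool} (hw : w ≠ []) : 0 < Mw w 0 1 ∧ 0 < Mw w 1 0 := by
  obtain _ | ⟨x, w⟩ := w
  · exact absurd rfl hw
  obtain ⟨h₀₀, h₀₁, h₁₀, h₁₁⟩ := Mw_entries_bounds w
  rw [Mw_cons]
  cases x <;> simp [A, B, mul_apply, Fin.sum_univ_two] <;> constructor <;> linarith

lemma transpose_mul_U_mul (P : Matrix (Fin 2) (Fin 2) ℤ) : Pᵀ * U * P = P.det • U := by
  ext i j
  fin_cases i <;> fin_cases j <;> simp [U, det_fin_two, mul_apply, Fin.sum_univ_two] <;> ring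

lemma sub_transpose_eq_smul_U (M : Matrix (Fin 2) (Fin 2) ℤ) : M - Mᵀ = (M 1 0 - M 0 1) • U := by
  ext i j
  fin_cases i <;> fin_cases j <;> simp [U]

lemma Mw_sub_Mw_eq_smul (v z w : List Bool) :
    Mw (v.reverse ++ [false] ++ z ++ [true] ++ w) - Mw (v.reverse ++ [true] ++ z.reverse ++ [false] ++ w) =
      ((A * Mw z * B) 1 0 - (A * Mw z * B) 0 1) • ((Mw v)ᵀ * U * Mw w) := by
  have hmid : A * Mw z * B - B * (Mw z)ᵀ * A = ((A * Mw z * B) 1 0 - (A * Mw z * B) 0 1) • U := by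
    rw [← sub_transpose_eq_smul_U]
    simp [transpose_mul, transpose_A, transpose_B, Matrix.mul_assoc]
  simp only [Mw_append, Mw_reverse, Mw_singleton, Bool.false_eq_true, if_true, if_false]
  calc _ = (Mw v)ᵀ * (A * Mw z * B - B * (Mw z)ᵀ * A) * Mw w := by
          simp only [Matrix.mul_sub, Matrix.sub_mul, Matrix.mul_assoc]
    _ = _ := by rw [hmid, Matrix.mul_smul, Matrix.smul_mul]

lemma transpose_Mw_mul_U_mul_Mw (u u₁ u₂ : List Bool) :
    (Mw (u ++ [false] ++ u₁))ᵀ * U * Mw (u ++ [true] ++ u₂) = (Mw u₁)ᵀ * !![1, 0; 3, 1] * Mw u₂ := by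
  have hAUB : A * U * B = !![1, 0; 3, 1] := by
    ext i j; fin_cases i <;> fin_cases j <;> simp [A, B, U, mul_apply, Fin.sum_univ_two]
  simp only [Mw_append, Mw_singleton, Bool.false_eq_true, if_true, if_false, transpose_mul,
    transpose_A]
  calc _ = (Mw u₁)ᵀ * A * ((Mw u)ᵀ * U * Mw u) * B * Mw u₂ := by
          simp only [Matrix.mul_assoc]
    _ = _ := by rw [transpose_mul_U_mul, det_Mw, one_smul, ← hAUB]; simp only [Matrix.mul_assoc]

lemma mval_sub_mval (u u₁ u₂ z : List Bool) :
    mval ((u ++ [false] ++ u₁).reverse ++ [false] ++ z ++ [true] ++ (u ++ [true] ++ u₂)) -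
      mval ((u ++ [false] ++ u₁).reverse ++ [true] ++ z.reverse ++ [false] ++ (u ++ [true] ++ u₂)) =
    (Mw z 0 0 + 3 * Mw z 1 0 + Mw z 1 1) *
      ((Mw u₁ 0 0 + 3 * Mw u₁ 1 0) * Mw u₂ 0 1 + Mw u₁ 1 0 * Mw u₂ 1 1) := by
  have h := congrFun (congrFun (Mw_sub_Mw_eq_smul (u ++ [false] ++ u₁) z (u ++ [true] ++ u₂)) 0) 1
  rw [transpose_Mw_mul_U_mul_Mw, Matrix.sub_apply] at h
  rw [mval, mval, h]
  simp [A, B, mul_apply, vecMul, dotProduct, Fin.sum_univ_two]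
  ring

lemma Mw_cross_eq_zero_iff (u₁ u₂ : List Bool) :
    (Mw u₁ 0 0 + 3 * Mw u₁ 1 0) * Mw u₂ 0 1 + Mw u₁ 1 0 * Mw u₂ 1 1 = 0 ↔ u₁ = [] ∧ u₂ = [] := by
  obtain ⟨hx₀₀, -, hx₁₀, -⟩ := Mw_entries_bounds u₁
  obtain ⟨-, hy₀₁, -, hy₁₁⟩ := Mw_entries_bounds u₂
  constructor
  · intro h
    constructor
    · by_contra hu₁
      nlinarith [(Mw_offDiag_pos hu₁).2]
    · by_contra hu₂
      nlinarith [(Mw_offDiag_pos hu₂).1]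
  · rintro ⟨rfl, rfl⟩
    simp [Mw]

theorem stmt12 (u u₁ u₂ z : List Bool) :
    mval ((u ++ [false] ++ u₁).reverse ++ [false] ++ z ++ [true] ++ (u ++ [true] ++ u₂)) ≥
    mval ((u ++ [false] ++ u₁).reverse ++ [true] ++ z.reverse ++ [false] ++ (u ++ [true] ++ u₂)) ∧
    (mval ((u ++ [false] ++ u₁).reverse ++ [false] ++ z ++ [true] ++ (u ++ [true] ++ u₂)) =
     mval ((u ++ [false] ++ u₁).reverse ++ [true] ++ z.reverse ++ [false] ++ (u ++ [true] ++ u₂))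
     ↔ u₁ = [] ∧ u₂ = []) := by
  obtain ⟨hz₀₀, -, hz₁₀, hz₁₁⟩ := Mw_entries_bounds z
  obtain ⟨hx₀₀, -, hx₁₀, -⟩ := Mw_entries_bounds u₁
  obtain ⟨-, hy₀₁, -, hy₁₁⟩ := Mw_entries_bounds u₂
  have hF : 0 < Mw z 0 0 + 3 * Mw z 1 0 + Mw z 1 1 := by linarith
  have hG : 0 ≤ (Mw u₁ 0 0 + 3 * Mw u₁ 1 0) * Mw u₂ 0 1 + Mw u₁ 1 0 * Mw u₂ 1 1 := by positivity
  rw [ge_iff_le, ← sub_nonneg, ← sub_eq_zero, ← Mw_cross_eq_zero_iff, mval_sub_mval]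
  exact ⟨mul_nonneg hF.le hG, mul_eq_zero_iff_left hF.ne'⟩
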